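/- arXiv:2502.16113 — 2 statements merged into one kernel-verified Lean document; each statement's English description precedes it below -/
import Mathlib

section
/- Define d_λ := (∏_{□∈λ} □) · Λ(−B*_λ + (1−q)(1−t) B_λ B*_λ) ∈ K^×, where the argument of Λ is expanded as a Laurent polynomial in q, t. Then for any partitions λ and μ = λ ∪ x obtained from λ by adding a box of (q,t)-content x, one has c(λ;x)/c*(μ;x) = −(1−q)(1−t) d_μ / ((1−qt) d_λ). -/
/- Common setup: K = ℚ(q,t), Laurent polynomials in q,t, the Λ operation,
   partitions as antitone eventually-zero functions ℕ → ℕ (0-indexed rows: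
   `f r` is the number of boxes in row `r+1`), the content sums B_λ, B*_λ,
   and the coefficients c(λ;x), c*(μ;x). -/

noncomputable section

/-- The field ℚ(q,t). -/
abbrev Kq : Type := FractionRing (MvPolynomial (Fin 2) ℚ)

/-- The variable q ∈ ℚ(q,t). -/
def qv : Kq := algebraMap (MvPolynomial (Fin 2) ℚ) Kq (MvPolynomial.X 0)

/-- The variable t ∈ ℚ(q,t). -/
def tv : Kq := algebraMap (MvPolynomial (Fin 2) ℚ) Kq (MvPolynomial.X 1)

/-- Laurent polynomials in q,t with integer coefficients. -/
abbrev LP : Type := AddMonoidAlgebra ℤ (ℤ × ℤ)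

/-- The monomial q^a t^b as a Laurent polynomial. -/
def mono (a b : ℤ) : LP := AddMonoidAlgebra.ofCoeff (Finsupp.single (a, b) 1)

/-- Λ(Σ φ_{a,b} q^a t^b) := ∏_{(a,b)≠(0,0)} (1 − q^a t^b)^{φ_{a,b}}. -/
def Lam (f : LP) : Kq :=
  ∏ p ∈ (f.coeff : (ℤ × ℤ) →₀ ℤ).support.erase (0, 0),
    (1 - qv ^ p.1 * tv ^ p.2) ^ ((f.coeff : (ℤ × ℤ) →₀ ℤ) p)

/-- B_λ: the sum of the (q,t)-contents of the boxes of λ (the box in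
0-indexed row r and 0-indexed column c contributes the monomial q^c t^r). -/
def Bl (f : ℕ → ℕ) : LP :=
  ∑ᶠ r : ℕ, ∑ c ∈ Finset.range (f r), mono (c : ℤ) (r : ℤ)

/-- B*_λ: the sum of the inverse (q,t)-contents of the boxes of λ. -/
def Bs (f : ℕ → ℕ) : LP :=
  ∑ᶠ r : ℕ, ∑ c ∈ Finset.range (f r), mono (-(c : ℤ)) (-(r : ℤ))

/-- c(λ;x) := −Λ(−x^{−1} + (1−q)(1−t) B_λ x^{−1} + 1), where x = q^a t^b is
the content of the added box. -/
def cc (f : ℕ → ℕ) (a b : ℤ) : Kq :=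
  -Lam (-(mono (-a) (-b)) + (1 - mono 1 0) * (1 - mono 0 1) * Bl f * mono (-a) (-b) + 1)

/-- c*(μ;x) := x^{−1} Λ(−(1−q)(1−t) B*_λ x), where μ = λ ∪ x and x = q^a t^b is
the content of the added box; here the argument `f` is λ = μ − x. -/
def ccs (f : ℕ → ℕ) (a b : ℤ) : Kq :=
  (qv ^ a * tv ^ b)⁻¹ * Lam (-((1 - mono 1 0) * (1 - mono 0 1) * Bs f * mono a b))

/-- d_λ := (∏_{□∈λ} □) · Λ(−B*_λ + (1−q)(1−t) B_λ B*_λ). -/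
def dcoef (f : ℕ → ℕ) : Kq :=
  (∏ᶠ r : ℕ, ∏ c ∈ Finset.range (f r), qv ^ (c : ℤ) * tv ^ (r : ℤ)) *
    Lam (-(Bs f) + (1 - mono 1 0) * (1 - mono 0 1) * Bl f * Bs f)

lemma qv_ne : qv ≠ 0 := by
  simp only [qv, ne_eq, map_eq_zero_iff _
    (IsFractionRing.injective (MvPolynomial (Fin 2) ℚ) Kq)]
  exact MvPolynomial.X_ne_zero 0

lemma tv_ne : tv ≠ 0 := by
  simp only [tv, ne_eq, map_eq_zero_iff _
    (IsFractionRing.injective (MvPolynomial (Fin 2) ℚ) Kq)]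
  exact MvPolynomial.X_ne_zero 1

lemma pow_eq_pow (m n m' n' : ℕ) (h : qv ^ m * tv ^ n = qv ^ m' * tv ^ n') :
    m = m' ∧ n = n' := by
  have inj := IsFractionRing.injective (MvPolynomial (Fin 2) ℚ) Kq
  have : (MvPolynomial.X 0 : MvPolynomial (Fin 2) ℚ) ^ m * MvPolynomial.X 1 ^ n
      = MvPolynomial.X 0 ^ m' * MvPolynomial.X 1 ^ n' := by
    apply inj
    simpa [qv, tv, map_mul, map_pow] using h
  rw [MvPolynomial.X_pow_eq_monomial, MvPolynomial.X_pow_eq_monomial,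
    MvPolynomial.X_pow_eq_monomial, MvPolynomial.X_pow_eq_monomial,
    MvPolynomial.monomial_mul, MvPolynomial.monomial_mul] at this
  have h2 := MvPolynomial.monomial_left_injective (one_ne_zero (α := ℚ)) (by simpa using this)
  constructor
  · have := DFunLike.congr_fun h2 0
    simpa [Finsupp.single_apply] using this
  · have := DFunLike.congr_fun h2 1
    simpa [Finsupp.single_apply] using this

lemma zpow_eq_one (a b : ℤ) (h : qv ^ a * tv ^ b = 1) : a = 0 ∧ b = 0 := by
  have key : qv ^ a.toNat * tv ^ b.toNat = qv ^ (-a).toNat * tv ^ (-b).toNat := by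
    have ha : (a.toNat : ℤ) - ((-a).toNat : ℤ) = a := by omega
    have hb : (b.toNat : ℤ) - ((-b).toNat : ℤ) = b := by omega
    have : qv ^ ((a.toNat : ℤ) - ((-a).toNat : ℤ)) * tv ^ ((b.toNat : ℤ) - ((-b).toNat:ℤ)) = 1 := by
      rw [ha, hb]; exact h
    rw [zpow_sub₀ qv_ne, zpow_sub₀ tv_ne, div_mul_div_comm, div_eq_one_iff_eq
      (by exact mul_ne_zero (zpow_ne_zero _ qv_ne) (zpow_ne_zero _ tv_ne))] at this
    rw [zpow_natCast, zpow_natCast, zpow_natCast, zpow_natCast] at this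
    exact this
  have := pow_eq_pow _ _ _ _ key
  omega

lemma base_ne {p : ℤ × ℤ} (hp : p ≠ (0, 0)) : 1 - qv ^ p.1 * tv ^ p.2 ≠ 0 := by
  intro h
  have : qv ^ p.1 * tv ^ p.2 = 1 := by linear_combination -h
  have := zpow_eq_one _ _ this
  exact hp (Prod.ext this.1 this.2)

def LamF (f : LP) (p : ℤ × ℤ) : Kq :=
  if p = (0, 0) then 1 else (1 - qv ^ p.1 * tv ^ p.2) ^ ((f.coeff : (ℤ × ℤ) →₀ ℤ) p)

lemma lamF_support (f : LP) :
    Function.mulSupport (LamF f) ⊆ ((f.coeff : (ℤ × ℤ) →₀ ℤ).support : Set (ℤ × ℤ)) := by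
  intro p hp
  simp only [Function.mem_mulSupport, LamF] at hp
  by_contra h
  simp only [Finset.coe_sort_coe, Finset.mem_coe, Finsupp.mem_support_iff, not_not] at h
  apply hp
  rw [h]
  split <;> simp

lemma Lam_eq_finprod (f : LP) : Lam f = ∏ᶠ p, LamF f p := by
  rw [finprod_eq_prod_of_mulSupport_subset (LamF f) (s := (f.coeff : (ℤ × ℤ) →₀ ℤ).support)
    (lamF_support f), Lam]
  rw [← Finset.prod_erase (f := LamF f) ((f.coeff : (ℤ × ℤ) →₀ ℤ).support) (a := ((0:ℤ),(0:ℤ)))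
    (by simp [LamF])]
  apply Finset.prod_congr rfl
  intro p hp
  rw [LamF, if_neg (Finset.ne_of_mem_erase hp)]

lemma Lam_add (f g : LP) : Lam (f + g) = Lam f * Lam g := by
  rw [Lam_eq_finprod, Lam_eq_finprod, Lam_eq_finprod, ← finprod_mul_distrib
    ((Set.Finite.subset (Finset.finite_toSet _) (lamF_support f)))
    ((Set.Finite.subset (Finset.finite_toSet _) (lamF_support g)))]
  apply finprod_congr
  intro p
  by_cases hp : p = (0, 0)
  · simp [LamF, hp]
  · simp only [LamF, if_neg hp, AddMonoidAlgebra.coeff_add, Finsupp.add_apply]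
    exact zpow_add₀ (base_ne hp) _ _

lemma Lam_zero : Lam 0 = 1 := by simp [Lam]

lemma Lam_ne (f : LP) : Lam f ≠ 0 := by
  rw [Lam]
  apply Finset.prod_ne_zero_iff.2
  intro p hp
  exact zpow_ne_zero _ (base_ne (Finset.ne_of_mem_erase hp))

lemma Lam_mono (a b : ℤ) (h : (a, b) ≠ ((0:ℤ), (0:ℤ))) :
    Lam (mono a b) = 1 - qv ^ a * tv ^ b := by
  rw [Lam, mono, AddMonoidAlgebra.coeff_ofCoeff, Finsupp.support_single_ne_zero _ one_ne_zero]
  rw [Finset.erase_eq_of_notMem (by simp only [Finset.mem_singleton]; exact fun hh => h hh.symm)]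
  simp

lemma Lam_neg (f : LP) : Lam (-f) = (Lam f)⁻¹ := by
  have : Lam f * Lam (-f) = 1 := by rw [← Lam_add]; simp [Lam_zero]
  exact eq_inv_of_mul_eq_one_left (by linear_combination this)

lemma mono_mul (a b c d : ℤ) : mono a b * mono c d = mono (a + c) (b + d) := by
  simp [mono, AddMonoidAlgebra.ofCoeff_single, AddMonoidAlgebra.single_mul_single]

lemma Bl_update (f : ℕ → ℕ) (M : ℕ) (hM : ∀ n, M ≤ n → f n = 0) (j : ℕ) :
    Bl (Function.update f j (f j + 1)) = Bl f + mono (f j) j := by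
  set N := max M (j + 1) with hN
  have hj : j ∈ Finset.range N := by simp only [Finset.mem_range]; omega
  have h1 : Bl f = ∑ r ∈ Finset.range N, ∑ c ∈ Finset.range (f r), mono (c : ℤ) (r : ℤ) := by
    apply finsum_eq_finset_sum_of_support_subset
    intro r hr
    simp only [Function.mem_support, ne_eq] at hr
    by_contra h
    simp only [Finset.coe_range, Set.mem_Iio, not_lt] at h
    exact hr (by rw [hM r (le_trans (le_max_left _ _) h)]; simp)
  have h2 : Bl (Function.update f j (f j + 1)) = ∑ r ∈ Finset.range N,
      ∑ c ∈ Finset.range (Function.update f j (f j + 1) r), mono (c : ℤ) (r : ℤ) := by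
    apply finsum_eq_finset_sum_of_support_subset
    intro r hr
    simp only [Function.mem_support, ne_eq] at hr
    by_contra h
    simp only [Finset.coe_range, Set.mem_Iio, not_lt] at h
    have hrj : r ≠ j := by omega
    exact hr (by rw [Function.update_of_ne hrj, hM r (le_trans (le_max_left _ _) h)]; simp)
  rw [h1, h2]
  have h3 : ∀ r ∈ Finset.range N,
      (∑ c ∈ Finset.range (Function.update f j (f j + 1) r), mono (c : ℤ) (r : ℤ))
      = (∑ c ∈ Finset.range (f r), mono (c : ℤ) (r : ℤ))
        + (if r = j then mono (f j) (j : ℤ) else 0) := by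
    intro r _
    by_cases hrj : r = j
    · subst hrj
      rw [Function.update_self, Finset.sum_range_succ, if_pos rfl]
    · rw [Function.update_of_ne hrj, if_neg hrj, add_zero]
  rw [Finset.sum_congr rfl h3, Finset.sum_add_distrib, Finset.sum_ite_eq' _ j, if_pos hj]

lemma Bs_update (f : ℕ → ℕ) (M : ℕ) (hM : ∀ n, M ≤ n → f n = 0) (j : ℕ) :
    Bs (Function.update f j (f j + 1)) = Bs f + mono (-(f j : ℤ)) (-(j : ℤ)) := by
  set N := max M (j + 1) with hN
  have hj : j ∈ Finset.range N := by simp only [Finset.mem_range]; omega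
  have h1 : Bs f = ∑ r ∈ Finset.range N, ∑ c ∈ Finset.range (f r),
      mono (-(c : ℤ)) (-(r : ℤ)) := by
    apply finsum_eq_finset_sum_of_support_subset
    intro r hr
    simp only [Function.mem_support, ne_eq] at hr
    by_contra h
    simp only [Finset.coe_range, Set.mem_Iio, not_lt] at h
    exact hr (by rw [hM r (le_trans (le_max_left _ _) h)]; simp)
  have h2 : Bs (Function.update f j (f j + 1)) = ∑ r ∈ Finset.range N,
      ∑ c ∈ Finset.range (Function.update f j (f j + 1) r), mono (-(c : ℤ)) (-(r : ℤ)) := by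
    apply finsum_eq_finset_sum_of_support_subset
    intro r hr
    simp only [Function.mem_support, ne_eq] at hr
    by_contra h
    simp only [Finset.coe_range, Set.mem_Iio, not_lt] at h
    have hrj : r ≠ j := by omega
    exact hr (by rw [Function.update_of_ne hrj, hM r (le_trans (le_max_left _ _) h)]; simp)
  rw [h1, h2]
  have h3 : ∀ r ∈ Finset.range N,
      (∑ c ∈ Finset.range (Function.update f j (f j + 1) r), mono (-(c : ℤ)) (-(r : ℤ)))
      = (∑ c ∈ Finset.range (f r), mono (-(c : ℤ)) (-(r : ℤ)))
        + (if r = j then mono (-(f j : ℤ)) (-(j : ℤ)) else 0) := by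
    intro r _
    by_cases hrj : r = j
    · subst hrj
      rw [Function.update_self, Finset.sum_range_succ, if_pos rfl]
    · rw [Function.update_of_ne hrj, if_neg hrj, add_zero]
  rw [Finset.sum_congr rfl h3, Finset.sum_add_distrib, Finset.sum_ite_eq' _ j, if_pos hj]

def Pc (f : ℕ → ℕ) : Kq := ∏ᶠ r : ℕ, ∏ c ∈ Finset.range (f r), qv ^ (c : ℤ) * tv ^ (r : ℤ)

lemma Pc_update (f : ℕ → ℕ) (M : ℕ) (hM : ∀ n, M ≤ n → f n = 0) (j : ℕ) :
    Pc (Function.update f j (f j + 1)) = Pc f * (qv ^ (f j : ℤ) * tv ^ (j : ℤ)) := by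
  set N := max M (j + 1) with hN
  have hj : j ∈ Finset.range N := by simp only [Finset.mem_range]; omega
  have h1 : Pc f = ∏ r ∈ Finset.range N, ∏ c ∈ Finset.range (f r),
      qv ^ (c : ℤ) * tv ^ (r : ℤ) := by
    apply finprod_eq_finset_prod_of_mulSupport_subset
    intro r hr
    simp only [Function.mem_mulSupport, ne_eq] at hr
    by_contra h
    simp only [Finset.coe_range, Set.mem_Iio, not_lt] at h
    exact hr (by rw [hM r (le_trans (le_max_left _ _) h)]; simp)
  have h2 : Pc (Function.update f j (f j + 1)) = ∏ r ∈ Finset.range N,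
      ∏ c ∈ Finset.range (Function.update f j (f j + 1) r), qv ^ (c : ℤ) * tv ^ (r : ℤ) := by
    apply finprod_eq_finset_prod_of_mulSupport_subset
    intro r hr
    simp only [Function.mem_mulSupport, ne_eq] at hr
    by_contra h
    simp only [Finset.coe_range, Set.mem_Iio, not_lt] at h
    have hrj : r ≠ j := by omega
    exact hr (by rw [Function.update_of_ne hrj, hM r (le_trans (le_max_left _ _) h)]; simp)
  rw [h1, h2]
  have h3 : ∀ r ∈ Finset.range N,
      (∏ c ∈ Finset.range (Function.update f j (f j + 1) r), qv ^ (c : ℤ) * tv ^ (r : ℤ))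
      = (∏ c ∈ Finset.range (f r), qv ^ (c : ℤ) * tv ^ (r : ℤ))
        * (if r = j then qv ^ (f j : ℤ) * tv ^ (j : ℤ) else 1) := by
    intro r _
    by_cases hrj : r = j
    · subst hrj
      rw [Function.update_self, Finset.prod_range_succ, if_pos rfl]
    · rw [Function.update_of_ne hrj, if_neg hrj, mul_one]
  rw [Finset.prod_congr rfl h3, Finset.prod_mul_distrib, Finset.prod_ite_eq' _ j, if_pos hj]

lemma Pc_ne (f : ℕ → ℕ) (M : ℕ) (hM : ∀ n, M ≤ n → f n = 0) : Pc f ≠ 0 := by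
  have h1 : Pc f = ∏ r ∈ Finset.range M, ∏ c ∈ Finset.range (f r),
      qv ^ (c : ℤ) * tv ^ (r : ℤ) := by
    apply finprod_eq_finset_prod_of_mulSupport_subset
    intro r hr
    simp only [Function.mem_mulSupport, ne_eq] at hr
    by_contra h
    simp only [Finset.coe_range, Set.mem_Iio, not_lt] at h
    exact hr (by rw [hM r h]; simp)
  rw [h1]
  apply Finset.prod_ne_zero_iff.2
  intro r _
  apply Finset.prod_ne_zero_iff.2
  intro c _
  exact mul_ne_zero (zpow_ne_zero _ qv_ne) (zpow_ne_zero _ tv_ne)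

lemma key_lp (L S : LP) (a b : ℤ) :
    ((-(mono (-a) (-b)) + (1 - mono 1 0) * (1 - mono 0 1) * L * mono (-a) (-b) + 1)
      + (-S + (1 - mono 1 0) * (1 - mono 0 1) * L * S)) + mono 1 1
    = ((-((1 - mono 1 0) * (1 - mono 0 1) * S * mono a b))
      + (-(S + mono (-a) (-b)) + (1 - mono 1 0) * (1 - mono 0 1)
          * (L + mono a b) * (S + mono (-a) (-b)))) + (mono 1 0 + mono 0 1) := by
  have h1 : mono a b * mono (-a) (-b) = 1 := by
    rw [mono_mul]; simp [mono]; rfl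
  have h2 : mono 1 0 * mono 0 1 = mono 1 1 := by rw [mono_mul]; norm_num
  linear_combination (-(1 - mono 1 0) * (1 - mono 0 1)) * h1 - h2

lemma key_kq (f : ℕ → ℕ) (a b : ℤ) :
    Lam (-(mono (-a) (-b)) + (1 - mono 1 0) * (1 - mono 0 1) * Bl f * mono (-a) (-b) + 1)
      * Lam (-(Bs f) + (1 - mono 1 0) * (1 - mono 0 1) * Bl f * Bs f) * (1 - qv * tv)
    = Lam (-((1 - mono 1 0) * (1 - mono 0 1) * Bs f * mono a b))
      * Lam (-(Bs f + mono (-a) (-b)) + (1 - mono 1 0) * (1 - mono 0 1)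
          * (Bl f + mono a b) * (Bs f + mono (-a) (-b)))
      * ((1 - qv) * (1 - tv)) := by
  have m11 : Lam (mono 1 1) = 1 - qv * tv := by
    rw [Lam_mono 1 1 (by simp)]; norm_num
  have m10 : Lam (mono 1 0) = 1 - qv := by
    rw [Lam_mono 1 0 (by simp)]; norm_num
  have m01 : Lam (mono 0 1) = 1 - tv := by
    rw [Lam_mono 0 1 (by simp)]; norm_num
  have lam_one : Lam (1 : LP) = 1 := by
    have : (1 : LP) = AddMonoidAlgebra.ofCoeff (Finsupp.single ((0:ℤ), (0:ℤ)) 1) := rfl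
    rw [Lam, this, AddMonoidAlgebra.coeff_ofCoeff, Finsupp.support_single_ne_zero _ one_ne_zero]
    simp
  have := congrArg Lam (key_lp (Bl f) (Bs f) a b)
  simp only [Lam_add, m11, m10, m01, lam_one, mul_one] at this
  simp only [Lam_add, lam_one, mul_one]
  linear_combination this

lemma dcoef_eq (f : ℕ → ℕ) : dcoef f =
    Pc f * Lam (-(Bs f) + (1 - mono 1 0) * (1 - mono 0 1) * Bl f * Bs f) := rfl

theorem stmt1 (f : ℕ → ℕ) (hant : Antitone f) (hfin : ∃ M, ∀ n, M ≤ n → f n = 0)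
    (i : ℕ) (hi : 1 ≤ i)
    -- the box of content x = q^{λ_i} t^{i−1} is addable to λ in row i
    -- (convention λ₀ = +∞); μ = λ ∪ x is obtained by updating row i:
    (hadd : i = 1 ∨ f (i - 1) < f (i - 2)) :
    cc f (f (i - 1)) ((i : ℤ) - 1) / ccs f (f (i - 1)) ((i : ℤ) - 1) =
      -((1 - qv) * (1 - tv) * dcoef (Function.update f (i - 1) (f (i - 1) + 1))) /
        ((1 - qv * tv) * dcoef f) := by
  obtain ⟨M, hM⟩ := hfin
  set j := i - 1 with hj
  have hB : (i : ℤ) - 1 = (j : ℤ) := by omega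
  rw [hB, cc, ccs, dcoef_eq, dcoef_eq,
    Pc_update f M hM j, Bl_update f M hM j, Bs_update f M hM j]
  have hX : qv ^ (f j : ℤ) * tv ^ (j : ℤ) ≠ 0 :=
    mul_ne_zero (zpow_ne_zero _ qv_ne) (zpow_ne_zero _ tv_ne)
  have hqt : (1 : Kq) - qv * tv ≠ 0 := by
    have := base_ne (p := ((1:ℤ), (1:ℤ))) (by simp)
    simpa using this
  have hPc := Pc_ne f M hM
  have key := key_kq f (f j) (j : ℤ)
  have hC := Lam_ne (-((1 - mono 1 0) * (1 - mono 0 1) * Bs f * mono (f j) (j : ℤ)))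
  have hD := Lam_ne (-(Bs f) + (1 - mono 1 0) * (1 - mono 0 1) * Bl f * Bs f)
  set X := qv ^ (f j : ℤ) * tv ^ (j : ℤ) with hXdef
  set A := Lam (-(mono (-(f j : ℤ)) (-(j : ℤ))) + (1 - mono 1 0) * (1 - mono 0 1) * Bl f
    * mono (-(f j : ℤ)) (-(j : ℤ)) + 1) with hA
  set C := Lam (-((1 - mono 1 0) * (1 - mono 0 1) * Bs f * mono (f j : ℤ) (j : ℤ))) with hCdef
  set Dl := Lam (-(Bs f) + (1 - mono 1 0) * (1 - mono 0 1) * Bl f * Bs f) with hDl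
  set Dm := Lam (-(Bs f + mono (-(f j : ℤ)) (-(j : ℤ))) + (1 - mono 1 0) * (1 - mono 0 1)
    * (Bl f + mono (f j : ℤ) (j : ℤ)) * (Bs f + mono (-(f j : ℤ)) (-(j : ℤ)))) with hDm
  field_simp
  linear_combination (-1 : Kq) * key


end
end

section
/- For all m₁, m₂ ∈ ℤ there exist Laurent polynomials α, β ∈ R with β symmetric such that z₁^{m₁} z₂^{m₂} = (q^{−1}z₁ − t z₂)·α + (z₁ − q z₂)·β. -/
noncomputable section

/-- R = K[z₁^{±1}, z₂^{±1}], Laurent polynomials in two variables over K: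
the element `Finsupp.single (a, b) c` is the term c·z₁^a z₂^b. -/
abbrev R5 : Type := AddMonoidAlgebra Kq (ℤ × ℤ)

/-- The monomial c·z₁^a z₂^b. -/
def zmono (a b : ℤ) (c : Kq) : R5 := AddMonoidAlgebra.ofCoeff (Finsupp.single (a, b) c)

lemma alg_inj : Function.Injective (algebraMap (MvPolynomial (Fin 2) ℚ) Kq) :=
  IsFractionRing.injective _ _

lemma qt_ne : qv * tv ≠ 0 := mul_ne_zero qv_ne tv_ne

lemma tv_ne_one : tv ≠ 1 := by
  intro h
  have := alg_inj (h.trans (map_one _).symm)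
  have h2 := congrArg (MvPolynomial.eval (fun _ => (2:ℚ))) this
  simp at h2

lemma qt_pow_ne_negone_nat (n : ℕ) : (qv * tv) ^ n ≠ -1 := by
  intro h
  have hq : qv * tv = algebraMap (MvPolynomial (Fin 2) ℚ) Kq (MvPolynomial.X 0 * MvPolynomial.X 1) := by
    rw [map_mul]; rfl
  rw [hq, ← map_pow] at h
  have h1 : algebraMap (MvPolynomial (Fin 2) ℚ) Kq ((MvPolynomial.X 0 * MvPolynomial.X 1)^n) =
      algebraMap (MvPolynomial (Fin 2) ℚ) Kq (-1) := by rw [h, map_neg, map_one]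
  have := alg_inj h1
  have h2 := congrArg (MvPolynomial.eval (fun _ => (2:ℚ))) this
  simp at h2
  nlinarith [pow_pos (show (0:ℚ) < 2*2 by norm_num) n, h2]

lemma qt_zpow_ne_negone (k : ℤ) : (qv * tv) ^ k ≠ -1 := by
  rcases le_or_gt 0 k with hk | hk
  · lift k to ℕ using hk
    rw [zpow_natCast]; exact qt_pow_ne_negone_nat k
  · intro h
    have h2 : (qv * tv) ^ (-k) = -1 := by
      have := congrArg (·⁻¹) h
      simpa [← zpow_neg, inv_neg, inv_one] using this
    lift (-k) to ℕ using (by omega) with n hn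
    rw [zpow_natCast] at h2
    exact qt_pow_ne_negone_nat n h2

def fP : R5 := zmono 1 0 qv⁻¹ - zmono 0 1 tv
def gP : R5 := zmono 1 0 1 - zmono 0 1 qv

lemma mono_mul_s5 (a b a' b' : ℤ) (c c' : Kq) :
    zmono a b c * zmono a' b' c' = zmono (a+a') (b+b') (c*c') := by
  rw [zmono, zmono, zmono, AddMonoidAlgebra.ofCoeff_single, AddMonoidAlgebra.ofCoeff_single,
    AddMonoidAlgebra.ofCoeff_single, AddMonoidAlgebra.single_mul_single]
  rfl

lemma zm_add (a b : ℤ) (c c' : Kq) : zmono a b c + zmono a b c' = zmono a b (c+c') :=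
  congrArg AddMonoidAlgebra.ofCoeff (Finsupp.single_add _ _ _).symm

lemma zm_sub (a b : ℤ) (c c' : Kq) : zmono a b c - zmono a b c' = zmono a b (c-c') := by
  simp [zmono, AddMonoidAlgebra.ofCoeff_single, AddMonoidAlgebra.single_sub]

def QS : Submodule Kq R5 where
  carrier := {x | ∃ α β : R5,
    (∀ a b : ℤ, (β.coeff : (ℤ × ℤ) →₀ Kq) (a, b) = (β.coeff : (ℤ × ℤ) →₀ Kq) (b, a)) ∧
    x = fP * α + gP * β}
  add_mem' := by
    rintro x y ⟨α₁, β₁, h₁, rfl⟩ ⟨α₂, β₂, h₂, rfl⟩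
    exact ⟨α₁ + α₂, β₁ + β₂, fun a b => by
      show (β₁.coeff : (ℤ × ℤ) →₀ Kq) (a, b) + (β₂.coeff : (ℤ × ℤ) →₀ Kq) (a, b) = (β₁.coeff : (ℤ × ℤ) →₀ Kq) (b, a) + (β₂.coeff : (ℤ × ℤ) →₀ Kq) (b, a)
      rw [h₁ a b, h₂ a b], by ring⟩
  zero_mem' := ⟨0, 0, fun _ _ => rfl, by rw [mul_zero, mul_zero, add_zero]⟩
  smul_mem' := by
    rintro c x ⟨α, β, h, rfl⟩
    exact ⟨c • α, c • β, fun a b => by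
      show c * (β.coeff : (ℤ × ℤ) →₀ Kq) (a, b) = c * (β.coeff : (ℤ × ℤ) →₀ Kq) (b, a)
      rw [h a b], by rw [smul_add, mul_smul_comm, mul_smul_comm]⟩

lemma fP_mul_mem (α : R5) : fP * α ∈ QS := ⟨α, 0, fun _ _ => rfl, by rw [mul_zero, add_zero]⟩

lemma step (a b : ℤ) (c : Kq) :
    zmono (a+1) b c - zmono a (b+1) (qv * tv * c) ∈ QS := by
  refine ⟨zmono a b (qv * c), 0, fun _ _ => rfl, ?_⟩
  rw [mul_zero, add_zero, fP, sub_mul, mono_mul_s5, mono_mul_s5, zero_add, zero_add,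
    add_comm 1 a, add_comm 1 b, inv_mul_cancel_left₀ qv_ne]
  congr 1
  ring_nf

lemma step' (a b : ℤ) (c : Kq) :
    zmono a b c - zmono (a+1) (b-1) ((qv*tv)⁻¹ * c) ∈ QS := by
  have h := step a (b-1) ((qv*tv)⁻¹ * c)
  rw [sub_add_cancel, mul_inv_cancel_left₀ qt_ne] at h
  have := QS.neg_mem h
  rw [neg_sub] at this
  exact this

lemma reduce : ∀ (a b : ℤ) (c : Kq),
    zmono a b c - zmono 0 (a+b) ((qv*tv)^a * c) ∈ QS := by
  intro a
  induction a using Int.induction_on with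
  | zero =>
    intro b c
    rw [zpow_zero, one_mul, zero_add, sub_self]
    exact QS.zero_mem
  | succ n ih =>
    intro b c
    have h1 := step n b c
    have h2 := ih (b+1) (qv*tv*c)
    have e1 : (n:ℤ) + (b+1) = (n:ℤ) + 1 + b := by ring
    have e2 : (qv*tv)^((n:ℤ)+1) * c = (qv*tv)^(n:ℤ) * (qv*tv*c) := by
      rw [zpow_add_one₀ qt_ne]; ring
    rw [e1] at h2
    have : zmono ((n:ℤ)+1) b c - zmono 0 ((n:ℤ)+1+b) ((qv*tv)^((n:ℤ)+1) * c) =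
        (zmono ((n:ℤ)+1) b c - zmono (n:ℤ) (b+1) (qv*tv*c)) +
        (zmono (n:ℤ) (b+1) (qv*tv*c) - zmono 0 ((n:ℤ)+1+b) ((qv*tv)^(n:ℤ) * (qv*tv*c))) := by
      rw [← e2]; abel
    rw [this]
    exact QS.add_mem h1 h2
  | pred n ih =>
    intro b c
    have h1 := step' (-(n:ℤ)-1) b c
    rw [sub_add_cancel] at h1
    have h2 := ih (b-1) ((qv*tv)⁻¹ * c)
    have e1 : -(n:ℤ) + (b-1) = -(n:ℤ)-1 + b := by ring
    have e2 : (qv*tv)^(-(n:ℤ)-1) * c = (qv*tv)^(-(n:ℤ)) * ((qv*tv)⁻¹ * c) := by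
      rw [zpow_sub_one₀ qt_ne]; ring
    rw [e1] at h2
    have : zmono (-(n:ℤ)-1) b c - zmono 0 (-(n:ℤ)-1+b) ((qv*tv)^(-(n:ℤ)-1) * c) =
        (zmono (-(n:ℤ)-1) b c - zmono (-(n:ℤ)) (b-1) ((qv*tv)⁻¹ * c)) +
        (zmono (-(n:ℤ)) (b-1) ((qv*tv)⁻¹ * c) - zmono 0 (-(n:ℤ)-1+b) ((qv*tv)^(-(n:ℤ)) * ((qv*tv)⁻¹ * c))) := by
      rw [← e2]; abel
    rw [this]
    exact QS.add_mem h1 h2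

lemma z2pow (m : ℤ) : zmono 0 m 1 ∈ QS := by
  set w : Kq := (qv*tv)^(m-1) with hw
  set d : Kq := qv*tv*w + qv*tv - qv*w - qv with hdd
  have hw1 : w + 1 ≠ 0 := by
    intro h
    exact qt_zpow_ne_negone (m-1) (eq_neg_of_add_eq_zero_left h)
  have hd : d ≠ 0 := by
    rw [hdd, show qv*tv*w + qv*tv - qv*w - qv = qv*((tv-1)*(w+1)) from by ring]
    exact mul_ne_zero qv_ne (mul_ne_zero (sub_ne_zero.mpr tv_ne_one) hw1)
  set c : Kq := d⁻¹ with hc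
  set β : R5 := zmono (m-1) 0 c + zmono 0 (m-1) c with hβ
  have hsym : ∀ a b : ℤ, (β.coeff : (ℤ × ℤ) →₀ Kq) (a, b) = (β.coeff : (ℤ × ℤ) →₀ Kq) (b, a) := by
    intro a b
    show (Finsupp.single ((m:ℤ)-1, (0:ℤ)) c) (a,b) + (Finsupp.single ((0:ℤ), m-1) c) (a,b)
       = (Finsupp.single ((m:ℤ)-1, (0:ℤ)) c) (b,a) + (Finsupp.single ((0:ℤ), m-1) c) (b,a)
    simp only [Finsupp.single_apply, Prod.mk.injEq]
    by_cases h1 : m - 1 = a <;> by_cases h2 : m - 1 = b <;>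
      by_cases h3 : (0:ℤ) = a <;> by_cases h4 : (0:ℤ) = b <;>
      by_cases h5 : a = b <;> simp [h1, h2, h3, h4, h5]
  have h0 : gP * β ∈ QS := ⟨0, β, hsym, by rw [mul_zero, zero_add]⟩
  have hgβ : gP * β = zmono m 0 c + zmono 1 (m-1) c -
      (zmono (m-1) 1 (qv*c) + zmono 0 m (qv*c)) := by
    rw [hβ, gP, sub_mul, mul_add, mul_add, mono_mul_s5, mono_mul_s5, mono_mul_s5, mono_mul_s5]
    rw [show (1:ℤ)+(m-1) = m from by ring]
    simp only [add_zero, zero_add, one_mul]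
  have hD1 := reduce m 0 c
  rw [add_zero] at hD1
  have hD2 := reduce 1 (m-1) c
  rw [show (1:ℤ)+(m-1) = m from by ring, zpow_one] at hD2
  have hD3 := reduce (m-1) 1 (qv*c)
  rw [show m-(1:ℤ)+1 = m from by ring] at hD3
  have comb := QS.add_mem (QS.sub_mem (QS.sub_mem h0 hD1) hD2) hD3
  have e : zmono 0 m ((qv*tv)^m * c) + zmono 0 m (qv*tv*c) -
      zmono 0 m ((qv*tv)^(m-1)*(qv*c)) - zmono 0 m (qv*c) = zmono 0 m 1 := by
    rw [zm_add, zm_sub, zm_sub]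
    congr 1
    have hm : (qv*tv)^m = (qv*tv)^(m-1) * (qv*tv) := by
      rw [← zpow_add_one₀ qt_ne, show m-(1:ℤ)+1 = m from by ring]
    rw [hm, ← hw,
      show (w*(qv*tv)*c + qv*tv*c - w*(qv*c)) - qv*c = (qv*tv*w + qv*tv - qv*w - qv) * c from by ring,
      ← hdd, hc]
    exact mul_inv_cancel₀ hd
  have key : zmono 0 m 1 = gP * β - (zmono m 0 c - zmono 0 m ((qv*tv)^m * c)) -
      (zmono 1 (m-1) c - zmono 0 m (qv*tv*c)) +
      (zmono (m-1) 1 (qv*c) - zmono 0 m ((qv*tv)^(m-1)*(qv*c))) := by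
    rw [hgβ, ← e]; abel
  rw [key]
  exact comb

theorem stmt5 (m₁ m₂ : ℤ) :
    ∃ α β : R5,
      -- β is symmetric (invariant under exchanging z₁ and z₂):
      (∀ a b : ℤ, (β.coeff : (ℤ × ℤ) →₀ Kq) (a, b) = (β.coeff : (ℤ × ℤ) →₀ Kq) (b, a)) ∧
      zmono m₁ m₂ 1 =
        (zmono 1 0 qv⁻¹ - zmono 0 1 tv) * α + (zmono 1 0 1 - zmono 0 1 qv) * β := by
  have h1 := reduce m₁ m₂ 1
  have h2 := QS.smul_mem ((qv*tv)^m₁) (z2pow (m₁+m₂))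
  have hs : ((qv*tv)^m₁) • zmono 0 (m₁+m₂) 1 = zmono 0 (m₁+m₂) ((qv*tv)^m₁ * 1) := by
    rw [zmono, zmono, ← AddMonoidAlgebra.ofCoeff_smul, Finsupp.smul_single, smul_eq_mul]
  rw [hs] at h2
  have h3 := QS.add_mem h1 h2
  rw [sub_add_cancel] at h3
  obtain ⟨α, β, hsym, heq⟩ := h3
  exact ⟨α, β, hsym, heq⟩

end
end
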